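/- arXiv:0712.1872 — 4 statements merged into one kernel-verified Lean document; each statement's English description precedes it below -/
import Mathlib

section
/- Let p be an offspring distribution on ℕ with probability generating function f(s) = ∑_{k=0}^∞ p(k)·s^k, and suppose the process is supercritical, i.e. the mean offspring number m = ∑_{k=0}^∞ k·p(k) (valued in [0,∞]) satisfies m > 1. Let q := inf { s ∈ [0,1] : f(s) = s } be the extinction probability. Then ∑_{k=0}^∞ (k+1)·p(k+1)·q^k < 1. In other words, the mean of the offspring distribution of the process conditioned on extinction, which equals f'(q), is strictly less than one: the conditioned process is subcritical. -/
/-!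
Since `m > 1`, some truncated mean `∑_{k<n} k pₖ` exceeds `1`; as
`1 - f(s) ≥ ∑_{k<n} pₖ (1 - sᵏ) = (1 - s) ∑_{k<n} pₖ (1 + s + ⋯ + sᵏ⁻¹)`, this gives `s < 1` with
`f(s) < s`, and since `f(0) ≥ 0`, `f` has a fixed point in `[0, s]`. So `q < 1`. At the fixed point
`q`, `(1 - q) f'(q) = ∑ pₖ k qᵏ⁻¹ (1 - q) < ∑ pₖ (1 - qᵏ) = 1 - f(q) = 1 - q`, termwise because
`k qᵏ⁻¹ ≤ 1 + q + ⋯ + qᵏ⁻¹`, strictly for `k ≥ 2`, and `m > 1` forces `pₖ > 0` for some `k ≥ 2`.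
-/

open scoped NNReal ENNReal

open Finset Set

lemma succ_mul_pow_le_geom_sum {q : ℝ} (hq0 : 0 ≤ q) (hq1 : q ≤ 1) (k : ℕ) :
    (k + 1) * q ^ k ≤ ∑ j ∈ range (k + 1), q ^ j := by
  calc (k + 1) * q ^ k = ∑ _j ∈ range (k + 1), q ^ k := by simp
    _ ≤ ∑ j ∈ range (k + 1), q ^ j :=
      sum_le_sum fun j hj => pow_le_pow_of_le_one hq0 hq1 (Nat.lt_succ_iff.mp (mem_range.mp hj))

lemma succ_mul_pow_lt_geom_sum {q : ℝ} (hq0 : 0 ≤ q) (hq1 : q < 1) {k : ℕ} (hk : k ≠ 0) :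
    (k + 1) * q ^ k < ∑ j ∈ range (k + 1), q ^ j := by
  calc (k + 1) * q ^ k = ∑ _j ∈ range (k + 1), q ^ k := by simp
    _ < ∑ j ∈ range (k + 1), q ^ j :=
      sum_lt_sum
        (fun j hj => pow_le_pow_of_le_one hq0 hq1.le (Nat.lt_succ_iff.mp (mem_range.mp hj)))
        ⟨0, by simp, by simpa using pow_lt_one₀ hq0 hq1 hk⟩

lemma ContinuousOn.csInf_fixedPoints_mem {f : ℝ → ℝ} {a b : ℝ} (hf : ContinuousOn f (Icc a b))
    (hne : ∃ s ∈ Icc a b, f s = s) :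
    sInf {s | s ∈ Icc a b ∧ f s = s} ∈ {s | s ∈ Icc a b ∧ f s = s} := by
  have hclosed : IsClosed {s | s ∈ Icc a b ∧ f s = s} := by
    convert (hf.sub continuousOn_id).preimage_isClosed_of_isClosed isClosed_Icc
      (isClosed_singleton (x := 0)) using 1
    ext s
    simp [sub_eq_zero]
  exact hclosed.csInf_mem hne ⟨a, fun s hs => hs.1.1⟩

noncomputable def pgf (p : ℕ → ℝ≥0) (s : ℝ) : ℝ := ∑' k, (p k : ℝ) * s ^ k

section pgf

variable {p : ℕ → ℝ≥0} {s : ℝ}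

lemma norm_coeff_mul_pow_le (hs : s ∈ Icc (0 : ℝ) 1) (k : ℕ) : ‖(p k : ℝ) * s ^ k‖ ≤ p k := by
  rw [norm_mul, Real.norm_of_nonneg (p k).coe_nonneg, norm_pow, Real.norm_of_nonneg hs.1]
  exact mul_le_of_le_one_right (p k).coe_nonneg (pow_le_one₀ hs.1 hs.2)

lemma continuousOn_pgf (hp : Summable fun k => (p k : ℝ)) : ContinuousOn (pgf p) (Icc 0 1) :=
  continuousOn_tsum (fun k => (continuous_const.mul (continuous_pow k)).continuousOn) hp
    fun k _ hs => norm_coeff_mul_pow_le hs k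

lemma pgf_nonneg (hs : 0 ≤ s) : 0 ≤ pgf p s :=
  tsum_nonneg fun k => mul_nonneg (p k).coe_nonneg (pow_nonneg hs k)

lemma pgf_one (hp : HasSum (fun k => (p k : ℝ)) 1) : pgf p 1 = 1 := by
  simpa [pgf] using hp.tsum_eq

lemma hasSum_one_sub_pgf (hp : HasSum (fun k => (p k : ℝ)) 1) (hs : s ∈ Icc (0 : ℝ) 1) :
    HasSum (fun k => (p k : ℝ) * (1 - s ^ k)) (1 - pgf p s) := by
  simpa only [pgf, mul_sub, mul_one] using
    hp.sub (Summable.of_norm_bounded hp.summable (norm_coeff_mul_pow_le hs)).hasSum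

end pgf

section mean

variable {p : ℕ → ℝ≥0}

lemma exists_one_lt_sum_range_of_one_lt_mean (hm : 1 < ∑' k : ℕ, (k : ℝ≥0∞) * p k) :
    ∃ n, 1 < ∑ k ∈ range n, (k : ℝ) * p k := by
  rw [ENNReal.tsum_eq_iSup_nat] at hm
  obtain ⟨n, hn⟩ := lt_iSup_iff.mp hm
  exact ⟨n, by exact_mod_cast hn⟩

lemma exists_two_le_pos_of_one_lt_mean (hp : HasSum (fun k => (p k : ℝ)) 1)
    (hm : 1 < ∑' k : ℕ, (k : ℝ≥0∞) * p k) : ∃ k, 2 ≤ k ∧ 0 < p k := by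
  by_contra! h
  have hp' : ∑' k, (p k : ℝ≥0∞) = 1 := by
    rw [← ENNReal.ofReal_one, ← hp.tsum_eq,
      ENNReal.ofReal_tsum_of_nonneg (fun k => (p k).coe_nonneg) hp.summable]
    simp
  refine hm.not_ge (hp' ▸ ENNReal.tsum_le_tsum fun k => ?_)
  rcases lt_or_ge k 2 with hk | hk
  · exact mul_le_of_le_one_left zero_le (by exact_mod_cast Nat.lt_succ_iff.mp hk)
  · simp [nonpos_iff_eq_zero.mp (h k hk)]

lemma exists_pgf_lt_self (hp : HasSum (fun k => (p k : ℝ)) 1)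
    (hm : 1 < ∑' k : ℕ, (k : ℝ≥0∞) * p k) : ∃ s ∈ Ioo (0 : ℝ) 1, pgf p s < s := by
  obtain ⟨n, hn⟩ := exists_one_lt_sum_range_of_one_lt_mean hm
  -- `(1 - s) φ s = ∑_{k<n} pₖ (1 - sᵏ)`, and `φ 1` is the truncated mean
  set φ : ℝ → ℝ := fun s => ∑ k ∈ range n, (p k : ℝ) * ∑ j ∈ range k, s ^ j
  have hφ1 : 1 < φ 1 := by simpa [φ, mul_comm] using hn
  obtain ⟨s, hφs, hs⟩ : ∃ s, 1 < φ s ∧ s ∈ Ioo (0 : ℝ) 1 :=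
    (((by fun_prop : Continuous φ).continuousAt.eventually (eventually_gt_nhds hφ1)).filter_mono
      nhdsWithin_le_nhds |>.and (Ioo_mem_nhdsLT one_pos)).exists
  refine ⟨s, hs, ?_⟩
  have hφ_le : (1 - s) * φ s ≤ 1 - pgf p s :=
    calc (1 - s) * φ s = ∑ k ∈ range n, (p k : ℝ) * (1 - s ^ k) := by
          simp only [φ, mul_sum, ← mul_neg_geom_sum]
          ring_nf
      _ ≤ 1 - pgf p s :=
        sum_le_hasSum _ (fun k _ => mul_nonneg (p k).coe_nonneg
          (sub_nonneg.2 (pow_le_one₀ hs.1.le hs.2.le)))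
          (hasSum_one_sub_pgf hp (Ioo_subset_Icc_self hs))
  linarith [mul_lt_mul_of_pos_left hφs (sub_pos.2 hs.2)]

end mean

lemma ofReal_one_sub_mul_succ_mul_pow {q : ℝ} (hq0 : 0 ≤ q) (a : ℝ≥0) (k : ℕ) :
    ENNReal.ofReal (1 - q) * (((k : ℝ≥0∞) + 1) * a * ENNReal.ofReal q ^ k) =
      ENNReal.ofReal (a * ((1 - q) * ((k + 1) * q ^ k))) := by
  rw [ENNReal.ofReal_mul a.coe_nonneg, ENNReal.ofReal_mul' (by positivity),
    ENNReal.ofReal_mul (by positivity), ENNReal.ofReal_pow hq0, ENNReal.ofReal_coe_nnreal,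
    show ((k : ℝ) + 1) = ((k + 1 : ℕ) : ℝ) by push_cast; ring, ENNReal.ofReal_natCast]
  push_cast
  ring

theorem tsum_succ_mul_mul_pow_lt_one_of_pgf_eq_self {p : ℕ → ℝ≥0}
    (hp : HasSum (fun k => (p k : ℝ)) 1) {q : ℝ} (hq0 : 0 ≤ q) (hq1 : q < 1) (hfix : pgf p q = q)
    {k : ℕ} (hk : 2 ≤ k) (hpk : 0 < p k) :
    ∑' k : ℕ, ((k : ℝ≥0∞) + 1) * p (k + 1) * ENNReal.ofReal q ^ k < 1 := by
  set t : ℕ → ℝ≥0∞ := fun k => ((k : ℝ≥0∞) + 1) * p (k + 1) * ENNReal.ofReal q ^ k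
  set c : ℕ → ℝ := fun k => p (k + 1) * (1 - q ^ (k + 1))
  set a := ENNReal.ofReal (1 - q)
  have ha : a ≠ 0 := by simpa [a] using hq1
  have hc : HasSum c (1 - q) := by
    simpa [c, hfix] using (hasSum_nat_add_iff' 1).mpr (hasSum_one_sub_pgf hp ⟨hq0, hq1.le⟩)
  have hc_tsum : ∑' k, ENNReal.ofReal (c k) = a := by
    rw [← ENNReal.ofReal_tsum_of_nonneg (fun k => mul_nonneg (p _).coe_nonneg
      (sub_nonneg.2 (pow_le_one₀ hq0 hq1.le))) hc.summable, hc.tsum_eq]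
  have hle (k : ℕ) : a * t k ≤ ENNReal.ofReal (c k) := by
    dsimp only [t, c]
    rw [ofReal_one_sub_mul_succ_mul_pow hq0, ← mul_neg_geom_sum]
    exact ENNReal.ofReal_le_ofReal (mul_le_mul_of_nonneg_left (mul_le_mul_of_nonneg_left
      (succ_mul_pow_le_geom_sum hq0 hq1.le k) (sub_nonneg.2 hq1.le)) (p _).coe_nonneg)
  obtain ⟨j, rfl⟩ : ∃ j, k = j + 1 + 1 := ⟨k - 2, by omega⟩
  have hlt : a * t (j + 1) < ENNReal.ofReal (c (j + 1)) := by
    dsimp only [t, c]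
    rw [ofReal_one_sub_mul_succ_mul_pow hq0, ← mul_neg_geom_sum,
      ENNReal.ofReal_lt_ofReal_iff_of_nonneg (by positivity)]
    exact mul_lt_mul_of_pos_left (mul_lt_mul_of_pos_left
      (succ_mul_pow_lt_geom_sum hq0 hq1 j.succ_ne_zero) (sub_pos.2 hq1)) hpk
  have hfin : ∑' k, a * t k ≠ ⊤ :=
    ne_top_of_le_ne_top (hc_tsum ▸ ENNReal.ofReal_ne_top) (ENNReal.tsum_le_tsum hle)
  refine (ENNReal.mul_lt_mul_iff_right ha ENNReal.ofReal_ne_top).mp ?_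
  calc a * ∑' k, t k = ∑' k, a * t k := ENNReal.tsum_mul_left.symm
    _ < ∑' k, ENNReal.ofReal (c k) := ENNReal.tsum_lt_tsum hfin hle hlt
    _ = a * 1 := by rw [hc_tsum, mul_one]

/-- A supercritical offspring distribution (mean `m > 1`), conditioned on
extinction, has mean `f'(q) = ∑ (k+1) p(k+1) qᵏ < 1`, where `q` is the
extinction probability, i.e. the least fixed point of the generating
function `f` in `[0,1]`. -/
theorem supercritical_conditioned_mean_lt_one
    (p : ℕ → ℝ≥0) (hp : ∑' k, (p k : ℝ) = 1)
    (f : ℝ → ℝ) (hf : ∀ s, f s = ∑' k, (p k : ℝ) * s ^ k)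
    (hm : 1 < ∑' k : ℕ, (k : ℝ≥0∞) * (p k : ℝ≥0∞))
    (q : ℝ) (hq : q = sInf {s | s ∈ Set.Icc (0 : ℝ) 1 ∧ f s = s}) :
    ∑' k : ℕ, ((k : ℝ≥0∞) + 1) * (p (k + 1) : ℝ≥0∞) * (ENNReal.ofReal q) ^ k < 1 := by
  obtain rfl : f = pgf p := funext hf
  have hsum : Summable fun k => (p k : ℝ) := by
    by_contra hs
    simp [tsum_eq_zero_of_not_summable hs] at hp
  replace hp : HasSum (fun k => (p k : ℝ)) 1 := hp ▸ hsum.hasSum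
  obtain ⟨⟨hq0, -⟩, hfix⟩ : q ∈ {s | s ∈ Icc (0 : ℝ) 1 ∧ pgf p s = s} :=
    hq ▸ (continuousOn_pgf hsum).csInf_fixedPoints_mem ⟨1, ⟨zero_le_one, le_rfl⟩, pgf_one hp⟩
  obtain ⟨s, hs, hs_lt⟩ := exists_pgf_lt_self hp hm
  obtain ⟨c, hc, hc_fix⟩ := exists_mem_Icc_isFixedPt
    ((continuousOn_pgf hsum).mono (Icc_subset_Icc_right hs.2.le)) hs.1.le (pgf_nonneg le_rfl)
    hs_lt.le
  have hq1 : q < 1 :=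
    calc q ≤ c := hq ▸ csInf_le ⟨0, fun _ ht => ht.1.1⟩ ⟨⟨hc.1, hc.2.trans hs.2.le⟩, hc_fix⟩
      _ ≤ s := hc.2
      _ < 1 := hs.2
  obtain ⟨k, hk, hpk⟩ := exists_two_le_pos_of_one_lt_mean hp hm
  exact tsum_succ_mul_mul_pow_lt_one_of_pgf_eq_self hp hq0 hq1 hfix hk hpk
end

section
/- Let p be an offspring distribution on ℕ with probability generating function f(s) = ∑_{k=0}^∞ p(k)·s^k, and suppose the mean offspring number m = ∑_{k=0}^∞ k·p(k) (valued in [0,∞]) satisfies m > 1. Then the extinction probability q := inf { s ∈ [0,1] : f(s) = s } satisfies q < 1; equivalently, f has a fixed point in [0,1). -/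
open scoped NNReal ENNReal

/-- If the mean offspring number `m = ∑ k p(k)` exceeds one (supercriticality),
then the extinction probability `q = inf { s ∈ [0,1] : f(s) = s }` is strictly
less than one; equivalently, `f` has a fixed point in `[0,1)`. -/
theorem supercritical_extinction_lt_one
    (p : ℕ → ℝ≥0) (hp : ∑' k, (p k : ℝ) = 1)
    (f : ℝ → ℝ) (hf : ∀ s, f s = ∑' k, (p k : ℝ) * s ^ k)
    (hm : 1 < ∑' k : ℕ, (k : ℝ≥0∞) * (p k : ℝ≥0∞))
    (q : ℝ) (hq : q = sInf {s | s ∈ Set.Icc (0 : ℝ) 1 ∧ f s = s}) :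
    q < 1 ∧ ∃ s ∈ Set.Ico (0 : ℝ) 1, f s = s := by
  -- summability of p
  have hsump : Summable (fun k => (p k : ℝ)) := by
    by_contra h
    rw [tsum_eq_zero_of_not_summable h] at hp
    norm_num at hp
  -- summability of p k * s^k on [0,1]
  have hsums : ∀ s : ℝ, s ∈ Set.Icc (0:ℝ) 1 → Summable (fun k => (p k : ℝ) * s ^ k) := by
    intro s hs
    refine Summable.of_nonneg_of_le (fun k => ?_) (fun k => ?_) hsump
    · exact mul_nonneg (p k).coe_nonneg (pow_nonneg hs.1 k)
    · nth_rewrite 2 [← mul_one ((p k : ℝ))]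
      exact mul_le_mul_of_nonneg_left (pow_le_one₀ hs.1 hs.2) (p k).coe_nonneg
  -- finite set F with ∑_{k∈F} k p k > 1
  rw [ENNReal.tsum_eq_iSup_sum] at hm
  rw [lt_iSup_iff] at hm
  obtain ⟨F, hF⟩ := hm
  have hFr : 1 < ∑ k ∈ F, (k : ℝ) * (p k : ℝ) := by
    have : ((1:ℝ≥0∞)) < ((∑ k ∈ F, (k : ℝ≥0) * p k : ℝ≥0) : ℝ≥0∞) := by
      convert hF using 2
      push_cast
      rfl
    have h2 : (1:ℝ≥0) < ∑ k ∈ F, (k : ℝ≥0) * p k := by exact_mod_cast this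
    calc (1:ℝ) < ((∑ k ∈ F, (k : ℝ≥0) * p k : ℝ≥0) : ℝ) := by exact_mod_cast h2
    _ = ∑ k ∈ F, (k : ℝ) * (p k : ℝ) := by push_cast; rfl
  -- continuity: find s₀ ∈ [0,1) with ∑_{k∈F} k p k s₀^(k-1) > 1
  set u : ℝ → ℝ := fun s => ∑ k ∈ F, (k : ℝ) * (p k : ℝ) * s ^ (k - 1) with hu
  have hucont : Continuous u := by
    apply continuous_finset_sum
    intro k _
    exact (continuous_const.mul (continuous_pow _))
  have hu1 : 1 < u 1 := by
    simpa [hu, one_pow] using hFr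
  have hopen : IsOpen {s : ℝ | 1 < u s} := isOpen_lt continuous_const hucont
  obtain ⟨δ, hδ, hball⟩ := Metric.isOpen_iff.1 hopen 1 hu1
  set s₀ : ℝ := max (1 - δ/2) 0 with hs₀
  have hs₀0 : 0 ≤ s₀ := le_max_right _ _
  have hs₀1 : s₀ < 1 := by
    rcases max_cases (1 - δ/2) 0 with ⟨h, _⟩ | ⟨h, _⟩ <;> rw [hs₀, h] <;> linarith
  have hs₀ball : s₀ ∈ Metric.ball (1:ℝ) δ := by
    rw [Metric.mem_ball, Real.dist_eq, abs_sub_lt_iff]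
    constructor
    · linarith
    · have : 1 - δ/2 ≤ s₀ := le_max_left _ _
      linarith
  have hus₀ : 1 < u s₀ := hball hs₀ball
  -- key inequality: f s₀ < s₀
  have hmem : s₀ ∈ Set.Icc (0:ℝ) 1 := ⟨hs₀0, hs₀1.le⟩
  have hkey : f s₀ < s₀ := by
    have hsub : 1 - f s₀ = ∑' k, (p k : ℝ) * (1 - s₀ ^ k) := by
      have := Summable.tsum_sub hsump (hsums s₀ hmem)
      rw [hp] at this
      rw [hf, ← this]
      congr 1; funext k; ring
    have hterm_nonneg : ∀ k, 0 ≤ (p k : ℝ) * (1 - s₀ ^ k) := by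
      intro k
      apply mul_nonneg (p k).coe_nonneg
      have := pow_le_one₀ hs₀0 hs₀1.le (n := k)
      linarith
    have hsumsub : Summable (fun k => (p k : ℝ) * (1 - s₀ ^ k)) :=
      (hsump.sub (hsums s₀ hmem)).congr (by intro k; ring)
    have h1 : ∑ k ∈ F, (p k : ℝ) * (1 - s₀ ^ k) ≤ 1 - f s₀ := by
      rw [hsub]
      exact Summable.sum_le_tsum F (fun k _ => hterm_nonneg k) hsumsub
    -- 1 - s^k ≥ k s^(k-1) (1-s)
    have h2 : ∀ k : ℕ, (k : ℝ) * s₀ ^ (k-1) * (1 - s₀) ≤ 1 - s₀ ^ k := by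
      intro k
      have hg : (1 - s₀ ^ k) = (1 - s₀) * ∑ i ∈ Finset.range k, s₀ ^ i := by
        have := geom_sum_mul s₀ k
        linarith [this]
      rw [hg]
      have hge : (k : ℝ) * s₀ ^ (k-1) ≤ ∑ i ∈ Finset.range k, s₀ ^ i := by
        calc (k : ℝ) * s₀ ^ (k-1) = ∑ _i ∈ Finset.range k, s₀ ^ (k-1) := by
              rw [Finset.sum_const, Finset.card_range, nsmul_eq_mul]
        _ ≤ ∑ i ∈ Finset.range k, s₀ ^ i := by
              apply Finset.sum_le_sum
              intro i hi
              apply pow_le_pow_of_le_one hs₀0 hs₀1.le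
              have := Finset.mem_range.mp hi
              omega
      calc (k : ℝ) * s₀ ^ (k-1) * (1 - s₀) ≤ (∑ i ∈ Finset.range k, s₀ ^ i) * (1 - s₀) := by
            apply mul_le_mul_of_nonneg_right hge; linarith
      _ = (1 - s₀) * ∑ i ∈ Finset.range k, s₀ ^ i := by ring
    have h3 : u s₀ * (1 - s₀) ≤ ∑ k ∈ F, (p k : ℝ) * (1 - s₀ ^ k) := by
      rw [hu, Finset.sum_mul]
      apply Finset.sum_le_sum
      intro k _
      calc (k : ℝ) * (p k : ℝ) * s₀ ^ (k-1) * (1 - s₀)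
          = (p k : ℝ) * ((k : ℝ) * s₀ ^ (k-1) * (1 - s₀)) := by ring
      _ ≤ (p k : ℝ) * (1 - s₀ ^ k) :=
            mul_le_mul_of_nonneg_left (h2 k) (p k).coe_nonneg
    have h4 : 1 - s₀ < u s₀ * (1 - s₀) := by
      nth_rewrite 1 [← one_mul (1 - s₀)]
      apply mul_lt_mul_of_pos_right hus₀
      linarith
    linarith
  -- continuity of f on [0,1]
  have hfc : ContinuousOn f (Set.Icc (0:ℝ) 1) := by
    have : ContinuousOn (fun s : ℝ => ∑' k, (p k : ℝ) * s ^ k) (Set.Icc (0:ℝ) 1) := by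
      rw [continuousOn_iff_continuous_restrict]
      apply continuous_tsum (u := fun k => (p k : ℝ))
        (f := fun k (x : Set.Icc (0:ℝ) 1) => (p k : ℝ) * (x : ℝ) ^ k)
      · intro k
        exact continuous_const.mul ((continuous_subtype_val).pow k)
      · exact hsump
      · intro k x
        rw [Real.norm_eq_abs, abs_mul, abs_of_nonneg (p k).coe_nonneg,
            abs_of_nonneg (pow_nonneg x.2.1 k)]
        nth_rewrite 2 [← mul_one ((p k : ℝ))]
        exact mul_le_mul_of_nonneg_left (pow_le_one₀ x.2.1 x.2.2) (p k).coe_nonneg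
    exact this.congr (fun s _ => hf s)
  -- IVT on g := f - id over [0, s₀]
  have hgc : ContinuousOn (fun s => f s - s) (Set.Icc 0 s₀) :=
    (hfc.mono (Set.Icc_subset_Icc_right hs₀1.le)).sub continuousOn_id
  have hg0 : 0 ≤ f 0 - 0 := by
    rw [hf, sub_zero]
    exact tsum_nonneg (fun k => mul_nonneg (p k).coe_nonneg (pow_nonneg le_rfl k))
  have hgs₀ : f s₀ - s₀ ≤ 0 := by linarith
  have hivt := intermediate_value_Icc' hs₀0 hgc
  have h0mem : (0:ℝ) ∈ Set.Icc (f s₀ - s₀) (f 0 - 0) := ⟨hgs₀, hg0⟩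
  obtain ⟨c, hc, hgc0⟩ := hivt h0mem
  have hfc0 : f c = c := by linarith [sub_eq_zero.mp hgc0]
  have hc1 : c < 1 := lt_of_le_of_lt hc.2 hs₀1
  have hcS : c ∈ {s | s ∈ Set.Icc (0 : ℝ) 1 ∧ f s = s} := ⟨⟨hc.1, hc1.le⟩, hfc0⟩
  have hbdd : BddBelow {s | s ∈ Set.Icc (0 : ℝ) 1 ∧ f s = s} :=
    ⟨0, fun x hx => hx.1.1⟩
  constructor
  · rw [hq]
    exact lt_of_le_of_lt (csInf_le hbdd hcS) hc1
  · exact ⟨c, ⟨hc.1, hc1⟩, hfc0⟩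
end

section
/- Let p be an offspring distribution on ℕ with probability generating function f(s) = ∑_{k=0}^∞ p(k)·s^k, let q := inf { s ∈ [0,1] : f(s) = s } be the extinction probability, and assume q > 0 and f(q) = q. Then the only s ∈ [0,1] with f(q·s) = q·s is s = 1. Consequently the generating function f̃(s) := f(q·s)/q of the conditioned offspring law has 1 as its unique (hence least) fixed point in [0,1]: the process conditioned on extinction has extinction probability one. -/
/-!
Since `f 1 = 1`, the extinction probability `q` is the least fixed point of `f` in `[0,1]`.
If `f (q * s) = q * s` with `s ∈ [0,1]`, then `q * s ∈ [0,1]` is another fixed point, so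
`q ≤ q * s`, which forces `s = 1` because `q > 0`.
-/

open scoped NNReal

open Set

section FixedPoints

variable {f : ℝ → ℝ}

lemma sInf_fixedPoints_Icc_le {x : ℝ} (hx : x ∈ Icc (0 : ℝ) 1) (hfx : f x = x) :
    sInf {s | s ∈ Icc (0 : ℝ) 1 ∧ f s = s} ≤ x :=
  csInf_le ⟨0, fun _ hy => hy.1.1⟩ ⟨hx, hfx⟩

lemma sInf_fixedPoints_Icc_le_one (h1 : f 1 = 1) :
    sInf {s | s ∈ Icc (0 : ℝ) 1 ∧ f s = s} ≤ 1 :=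
  sInf_fixedPoints_Icc_le (right_mem_Icc.2 zero_le_one) h1

lemma eq_one_of_le_mul {q s : ℝ} (hq : 0 < q) (hs : s ≤ 1) (h : q ≤ q * s) : s = 1 :=
  le_antisymm hs (le_of_mul_le_mul_left (by rwa [mul_one]) hq)

lemma eq_one_of_fixedPoint_mul_sInf (h1 : f 1 = 1) {q : ℝ}
    (hq : q = sInf {s | s ∈ Icc (0 : ℝ) 1 ∧ f s = s}) (hq0 : 0 < q)
    {s : ℝ} (hs : s ∈ Icc (0 : ℝ) 1) (hfs : f (q * s) = q * s) : s = 1 := by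
  have hq1 : q ≤ 1 := hq ▸ sInf_fixedPoints_Icc_le_one h1
  have hqs : q * s ∈ Icc (0 : ℝ) 1 :=
    ⟨mul_nonneg hq0.le hs.1, mul_le_one₀ hq1 hs.1 hs.2⟩
  have hle : q ≤ q * s := hq.trans_le (sInf_fixedPoints_Icc_le hqs hfs)
  exact eq_one_of_le_mul hq0 hs.2 hle

end FixedPoints

lemma tsum_mul_one_pow_eq_one {p : ℕ → ℝ≥0} (hp : ∑' k, (p k : ℝ) = 1) :
    ∑' k, (p k : ℝ) * 1 ^ k = 1 := by
  simpa only [one_pow, mul_one] using hp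

/-- If the extinction probability `q = inf { s ∈ [0,1] : f(s) = s }` is
positive and is a fixed point of `f`, then the only `s ∈ [0,1]` with
`f(qs) = qs` is `s = 1`; hence the generating function `f̃(s) = f(qs)/q` of
the conditioned offspring law has `1` as its unique (hence least) fixed point
in `[0,1]`: the conditioned process has extinction probability one. -/
theorem conditioned_process_dies_out
    (p : ℕ → ℝ≥0) (hp : ∑' k, (p k : ℝ) = 1)
    (f : ℝ → ℝ) (hf : ∀ s, f s = ∑' k, (p k : ℝ) * s ^ k)
    (q : ℝ) (hq : q = sInf {s | s ∈ Set.Icc (0 : ℝ) 1 ∧ f s = s})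
    (hq0 : 0 < q) (hfix : f q = q) :
    (∀ s ∈ Set.Icc (0 : ℝ) 1, f (q * s) = q * s → s = 1) ∧
    (∀ s ∈ Set.Icc (0 : ℝ) 1, (f (q * s) / q = s ↔ s = 1)) := by
  have hf1 : f 1 = 1 := (hf 1).trans (tsum_mul_one_pow_eq_one hp)
  have eq_one_of_fixed : ∀ s ∈ Icc (0 : ℝ) 1, f (q * s) = q * s → s = 1 := fun s hs =>
    eq_one_of_fixedPoint_mul_sInf hf1 hq hq0 hs
  refine ⟨eq_one_of_fixed, fun s hs => ⟨fun h => eq_one_of_fixed s hs ?_, ?_⟩⟩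
  · rwa [div_eq_iff hq0.ne', mul_comm s] at h
  · rintro rfl
    rw [mul_one, hfix, div_self hq0.ne']
end

section
/- Let G be a Borel probability measure on ℝ, let p : ℕ → ℝ → ℝ≥0 with each p(k, ·) measurable and ∑_{k=0}^∞ p(k, u) = 1 for G-almost every u, and let q ∈ (0,1] satisfy ∫ (∑_{k=0}^∞ p(k, u)·q^k) dG(u) = q. Set h(u) := ∑_{k=0}^∞ p(k, u)·q^k, let G̃ := G.withDensity (u ↦ h(u)/q), and define the conditioned splitting probabilities p̃(k, u) := p(k, u)·q^k / h(u) when h(u) > 0 and p̃(k, u) := 0 otherwise. Then for every k ∈ ℕ and every Borel set A ⊆ ℝ, ∫_A p̃(k, u) dG̃(u) = (1/q)·∫_A p(k, u)·q^k dG(u). Hence the joint conditioned distribution of offspring number and life span factorizes as p̃_k(u)·G̃(du), and the conditioned process is again a Sevastyanov process with life span distribution G̃ and splitting probabilities p̃_k(u). -/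
open MeasureTheory
open scoped NNReal ENNReal Classical

/- The density `h / q` of `G̃` times the ratio `p̃(k,u) = p(k,u) qᵏ / h u`
is `p(k,u) qᵏ / q` wherever `h u` is finite, i.e. `G`-almost everywhere since `∫ h dG = q`;
where `h u = 0` the term `p(k,u) qᵏ ≤ h u` vanishes as well. -/

namespace ENNReal

theorem div_mul_ite_div_eq_div {a b : ℝ≥0∞} (c : ℝ≥0∞) (hab : a ≤ b) (hb : b ≠ ∞) :
    b / c * (if 0 < b then a / b else 0) = a / c := by
  rcases (zero_le : 0 ≤ b).eq_or_lt with hb0 | hb0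
  · obtain rfl : a = 0 := le_antisymm (hb0 ▸ hab) zero_le
    simp [← hb0]
  · rw [if_pos hb0]
    calc b / c * (a / b) = a / c * (b * b⁻¹) := by simp only [div_eq_mul_inv]; ring
      _ = a / c := by rw [ENNReal.mul_inv_cancel hb0.ne' hb, mul_one]

end ENNReal

theorem MeasureTheory.setLIntegral_withDensity_div_ite_div {α : Type*} [MeasurableSpace α]
    {μ : Measure α} {f h : α → ℝ≥0∞} (hf : Measurable f) (hh : Measurable h)
    (hfh : ∀ u, f u ≤ h u) (hh_fin : ∀ᵐ u ∂μ, h u ≠ ∞) (c : ℝ≥0∞) {A : Set α}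
    (hA : MeasurableSet A) :
    ∫⁻ u in A, (if 0 < h u then f u / h u else 0) ∂(μ.withDensity fun u => h u / c)
      = (∫⁻ u in A, f u ∂μ) / c := by
  have h_ratio_meas : Measurable fun u => if 0 < h u then f u / h u else 0 :=
    Measurable.ite (measurableSet_lt measurable_const hh) (hf.div hh) measurable_const
  rw [setLIntegral_withDensity_eq_setLIntegral_mul μ (hh.div_const c) h_ratio_meas hA,
    div_eq_mul_inv, ← lintegral_mul_const _ hf]
  refine lintegral_congr_ae (ae_restrict_of_ae ?_)
  filter_upwards [hh_fin] with u hu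
  simpa only [Pi.mul_apply, div_eq_mul_inv] using ENNReal.div_mul_ite_div_eq_div c (hfh u) hu

theorem conditioned_sevastyanov_joint_law_general
    (G : Measure ℝ)
    (p : ℕ → ℝ → ℝ≥0) (hmeas : ∀ k, Measurable (p k))
    (q : ℝ)
    (h : ℝ → ℝ≥0∞) (hh : ∀ u, h u = ∑' k, (p k u : ℝ≥0∞) * (ENNReal.ofReal q) ^ k)
    (hfix : ∫⁻ u, h u ∂G = ENNReal.ofReal q)
    (pt : ℕ → ℝ → ℝ≥0∞)
    (hpt : ∀ k u, pt k u =
      if 0 < h u then (p k u : ℝ≥0∞) * (ENNReal.ofReal q) ^ k / h u else 0) :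
    ∀ k : ℕ, ∀ A : Set ℝ, MeasurableSet A →
      ∫⁻ u in A, pt k u ∂(G.withDensity fun u => h u / ENNReal.ofReal q)
        = (∫⁻ u in A, (p k u : ℝ≥0∞) * (ENNReal.ofReal q) ^ k ∂G)
            / ENNReal.ofReal q := by
  intro k A hA
  have h_term_meas : ∀ j, Measurable fun u => (p j u : ℝ≥0∞) * ENNReal.ofReal q ^ j :=
    fun j => (hmeas j).coe_nnreal_ennreal.mul_const _
  have h_meas : Measurable h := by
    rw [funext hh]
    exact Measurable.tsum h_term_meas
  have h_fin : ∀ᵐ u ∂G, h u ≠ ∞ :=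
    (ae_lt_top h_meas (hfix ▸ ENNReal.ofReal_ne_top)).mono fun _ => LT.lt.ne
  have h_term_le : ∀ u, (p k u : ℝ≥0∞) * ENNReal.ofReal q ^ k ≤ h u := fun u =>
    hh u ▸ ENNReal.le_tsum k
  simp only [hpt k]
  exact setLIntegral_withDensity_div_ite_div (h_term_meas k) h_meas h_term_le h_fin _ hA

/-- For a Sevastyanov splitting process with life span distribution `G`,
splitting probabilities `p k u`, and extinction probability `q ∈ (0,1]`
satisfying `∫ h dG = q` where `h(u) = ∑ₖ p(k,u) qᵏ`, the conditioned process
with life span distribution `G̃ = (h/q) dG` and splitting probabilities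
`p̃(k,u) = p(k,u) qᵏ / h(u)` (when `h(u) > 0`, else `0`) satisfies
`∫_A p̃(k,u) dG̃(u) = (1/q) ∫_A p(k,u) qᵏ dG(u)` for every `k` and Borel `A`:
the conditioned joint law of offspring number and life span is
`p̃ₖ(u) G̃(du)`. -/
theorem conditioned_sevastyanov_joint_law
    (G : Measure ℝ) [IsProbabilityMeasure G]
    (p : ℕ → ℝ → ℝ≥0) (hmeas : ∀ k, Measurable (p k))
    (hsum : ∀ᵐ u ∂G, ∑' k, (p k u : ℝ≥0∞) = 1)
    (q : ℝ) (hq0 : 0 < q) (hq1 : q ≤ 1)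
    (h : ℝ → ℝ≥0∞) (hh : ∀ u, h u = ∑' k, (p k u : ℝ≥0∞) * (ENNReal.ofReal q) ^ k)
    (hfix : ∫⁻ u, h u ∂G = ENNReal.ofReal q)
    (pt : ℕ → ℝ → ℝ≥0∞)
    (hpt : ∀ k u, pt k u =
      if 0 < h u then (p k u : ℝ≥0∞) * (ENNReal.ofReal q) ^ k / h u else 0) :
    ∀ k : ℕ, ∀ A : Set ℝ, MeasurableSet A →
      ∫⁻ u in A, pt k u ∂(G.withDensity fun u => h u / ENNReal.ofReal q)
        = (∫⁻ u in A, (p k u : ℝ≥0∞) * (ENNReal.ofReal q) ^ k ∂G)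
            / ENNReal.ofReal q :=
  conditioned_sevastyanov_joint_law_general G p hmeas q h hh hfix pt hpt
end
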